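/- Let Ξ ⊂ ℝⁿ be a nonempty compact set and 0 < μ_low < μ_high. Define Z := ⋃_{z∈Ξ, μ∈[μ_low,μ_high]} prox_{μ⁻¹g}(z). Then there exists ν > 0 (depending only on Ξ, μ_low, μ_high) such that for every u ∈ Z with u ≠ 0, every nonzero entry of the vector Cu satisfies |(Cu)_i| ≥ ν, where C := [B; I] ∈ ℝ^{(p+n)×n} is the matrix obtained by stacking B on top of the n×n identity matrix (note Cu ≠ 0 whenever u ≠ 0). Equivalently, inf_{u∈Z∖{0}} min_{i∈supp(Cu)} |(Cu)_i| ≥ ν. -/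

import Mathlib

open scoped Classical

noncomputable section

/-- The box `Ω = {x : l ≤ x ≤ u}` in ℝⁿ. -/
def Om {n : ℕ} (l u : Fin n → ℝ) : Set (EuclideanSpace ℝ (Fin n)) :=
  {x | ∀ i, l i ≤ x i ∧ x i ≤ u i}

/-- The ℓ₀-norm (number of nonzero entries) of a vector. -/
def zeroNorm {m : ℕ} (v : Fin m → ℝ) : ℕ := (Function.support v).ncard

/-- `prox_{μ⁻¹ g}(z) = argmin_x (μ/2)‖x − z‖² + λ₁‖Bx‖₀ + λ₂‖x‖₀ + δ_Ω(x)`,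
written as the set of minimizers over Ω. -/
def proxSet {n p : ℕ} (B : Matrix (Fin p) (Fin n) ℝ) (lam1 lam2 : ℝ) (l u : Fin n → ℝ)
    (μ : ℝ) (z : EuclideanSpace ℝ (Fin n)) : Set (EuclideanSpace ℝ (Fin n)) :=
  {x | x ∈ Om l u ∧ ∀ y ∈ Om l u,
    μ / 2 * ‖x - z‖ ^ 2 + lam1 * (zeroNorm (B.mulVec x) : ℝ) + lam2 * (zeroNorm x : ℝ) ≤
    μ / 2 * ‖y - z‖ ^ 2 + lam1 * (zeroNorm (B.mulVec y) : ℝ) + lam2 * (zeroNorm y : ℝ)}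

/-! Fix a coordinate `i` of `C x` and the support patterns `S = supp x`, `T = supp (B x)`;
there are finitely many such choices. If `x` is a prox point with these patterns and
`(C x)ᵢ ≠ 0`, then any `y ∈ Ω` with `supp y ⊆ S`, `supp (B y) ⊆ T` and `(C y)ᵢ = 0` has an
ℓ₀-penalty smaller by at least `min λ₁ λ₂`, so optimality of `x` keeps `y` at a distance from `x`
that is bounded below uniformly in `z ∈ Ξ` and `μ ≤ μ_high`. Hence `x` lies in a compact set on
which the continuous function `|(C ·)ᵢ|` does not vanish, and is bounded below there. -/

open Filter Topology Function Matrix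

lemma IsCompact.eventually_le_abs_of_forall_le_dist {X : Type*} [PseudoMetricSpace X]
    {K : Set X} (hK : IsCompact K) {f : X → ℝ} (hf : ContinuousOn f K) {δ : ℝ} (hδ : 0 < δ) :
    ∀ᶠ ν in 𝓝[>] 0, ∀ x ∈ K, (∀ y ∈ K, f y = 0 → δ ≤ dist x y) → ν ≤ |f x| := by
  set K' := K ∩ {x | ∀ y ∈ K, f y = 0 → δ ≤ dist x y}
  have hK' : IsCompact K' := by
    refine hK.inter_right ?_
    simp only [Set.ofPred_forall]
    exact isClosed_iInter fun y => isClosed_iInter fun _ => isClosed_iInter fun _ =>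
      isClosed_le continuous_const (continuous_id.dist continuous_const)
  have hpos : ∀ x ∈ K', 0 < |f x| := fun x ⟨hxK, hx⟩ =>
    abs_pos.2 fun h0 => (hx x hxK h0).not_gt (by simpa using hδ)
  obtain ⟨ν₀, hν₀, hν₀le⟩ :=
    hK'.exists_forall_le' (hf.mono Set.inter_subset_left).abs hpos
  filter_upwards [Ioc_mem_nhdsGT hν₀] with ν hν x hxK hx
  exact hν.2.trans (hν₀le x ⟨hxK, hx⟩)

lemma sq_norm_sub_sub_sq_norm_sub_le {E : Type*} [SeminormedAddCommGroup E] {x y z : E} {R : ℝ}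
    (hx : ‖x - z‖ ≤ R) (hy : ‖y - z‖ ≤ R) :
    ‖y - z‖ ^ 2 - ‖x - z‖ ^ 2 ≤ 2 * R * ‖x - y‖ := by
  have htri : ‖y - z‖ - ‖x - z‖ ≤ ‖x - y‖ := by
    simpa [norm_sub_rev x y] using norm_sub_norm_le (y - z) (x - z)
  nlinarith [norm_nonneg (x - z), norm_nonneg (y - z), norm_nonneg (x - y)]

lemma zeroNorm_le_of_support_subset {m : ℕ} {v w : Fin m → ℝ} (h : support w ⊆ support v) :
    zeroNorm w ≤ zeroNorm v :=
  Set.ncard_le_ncard h (Set.toFinite _)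

lemma zeroNorm_lt_of_support_subset {m : ℕ} {v w : Fin m → ℝ} (h : support w ⊆ support v)
    {j : Fin m} (hv : v j ≠ 0) (hw : w j = 0) : zeroNorm w < zeroNorm v :=
  Set.ncard_lt_ncard ((Set.ssubset_iff_of_subset h).2 ⟨j, hv, fun h => h hw⟩) (Set.toFinite _)

lemma l0_penalty_add_min_le {n p : ℕ} (B : Matrix (Fin p) (Fin n) ℝ) {lam1 lam2 : ℝ}
    (hlam1 : 0 ≤ lam1) (hlam2 : 0 ≤ lam2) {v w : Fin n → ℝ}
    (hw : support w ⊆ support v) (hBw : support (B *ᵥ w) ⊆ support (B *ᵥ v))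
    {i : Fin p ⊕ Fin n} (hv : (fromRows B 1 *ᵥ v) i ≠ 0) (hw0 : (fromRows B 1 *ᵥ w) i = 0) :
    lam1 * zeroNorm (B *ᵥ w) + lam2 * zeroNorm w + min lam1 lam2 ≤
      lam1 * zeroNorm (B *ᵥ v) + lam2 * zeroNorm v := by
  rcases i with j | j <;> simp only [fromRows_mulVec, Sum.elim_inl, Sum.elim_inr, one_mulVec]
    at hv hw0
  · have hlt : (zeroNorm (B *ᵥ w) : ℝ) + 1 ≤ zeroNorm (B *ᵥ v) := by
      exact_mod_cast zeroNorm_lt_of_support_subset hBw hv hw0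
    have hle : (zeroNorm w : ℝ) ≤ zeroNorm v := by
      exact_mod_cast zeroNorm_le_of_support_subset hw
    nlinarith [min_le_left lam1 lam2]
  · have hlt : (zeroNorm w : ℝ) + 1 ≤ zeroNorm v := by
      exact_mod_cast zeroNorm_lt_of_support_subset hw hv hw0
    have hle : (zeroNorm (B *ᵥ w) : ℝ) ≤ zeroNorm (B *ᵥ v) := by
      exact_mod_cast zeroNorm_le_of_support_subset hBw
    nlinarith [min_le_right lam1 lam2]

lemma isClosed_setOf_support_subset {X ι M : Type*} [TopologicalSpace X] [TopologicalSpace M]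
    [Zero M] [T1Space M] {f : X → ι → M} (hf : Continuous f) (S : Set ι) :
    IsClosed {x | support (f x) ⊆ S} := by
  simp only [support_subset_iff', Set.ofPred_forall]
  exact isClosed_iInter fun j => isClosed_iInter fun _ =>
    isClosed_singleton.preimage ((continuous_apply j).comp hf)

lemma isCompact_Om {n : ℕ} (l u : Fin n → ℝ) : IsCompact (Om l u) := by
  have hΩ : Om l u = EuclideanSpace.equiv (Fin n) ℝ ⁻¹' Set.Icc l u := by
    ext x
    simp only [Om, Set.mem_ofPred_eq, Set.mem_preimage, Set.mem_Icc, Pi.le_def, ← forall_and]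
    rfl
  rw [hΩ]
  exact (EuclideanSpace.equiv (Fin n) ℝ).toHomeomorph.isCompact_preimage.2 isCompact_Icc

lemma eventually_le_abs_fromRows_mulVec_of_support_eq {n p : ℕ} (B : Matrix (Fin p) (Fin n) ℝ)
    {lam1 lam2 : ℝ} (hlam1 : 0 < lam1) (hlam2 : 0 < lam2) (l u : Fin n → ℝ)
    {Ξ : Set (EuclideanSpace ℝ (Fin n))} (hΞ : Bornology.IsBounded Ξ)
    {μhigh : ℝ} (hμhigh : 0 < μhigh) (i : Fin p ⊕ Fin n) (S : Set (Fin n)) (T : Set (Fin p)) :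
    ∀ᶠ ν in 𝓝[>] 0, ∀ z ∈ Ξ, ∀ μ ∈ Set.Icc 0 μhigh, ∀ x ∈ proxSet B lam1 lam2 l u μ z,
      support x = S → support (B *ᵥ x) = T → (fromRows B 1 *ᵥ x) i ≠ 0 →
      ν ≤ |(fromRows B 1 *ᵥ x) i| := by
  obtain ⟨R, hR0, hR⟩ := (isBounded_sub (isCompact_Om l u).isBounded hΞ).exists_pos_norm_le
  set K := Om l u ∩ ({w | support w ⊆ S} ∩ {w | support (B *ᵥ w) ⊆ T})
  have hK : IsCompact K := (isCompact_Om l u).inter_right <|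
    (isClosed_setOf_support_subset (by fun_prop) S).inter
      (isClosed_setOf_support_subset (by fun_prop) T)
  have hδ : 0 < min lam1 lam2 / (μhigh * R) := by positivity
  filter_upwards [hK.eventually_le_abs_of_forall_le_dist
    (f := fun w => (fromRows B 1 *ᵥ w) i) (by fun_prop : Continuous _).continuousOn hδ] with ν hν
  rintro z hz μ ⟨hμ0, hμ⟩ x hx rfl rfl hxi
  refine hν x ⟨hx.1, Set.Subset.rfl, Set.Subset.rfl⟩ fun y ⟨hyΩ, hyS, hyT⟩ hyi => ?_
  have hgap := l0_penalty_add_min_le B hlam1.le hlam2.le hyS hyT hxi hyi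
  have hopt := hx.2 y hyΩ
  have hsq := sq_norm_sub_sub_sq_norm_sub_le (hR _ (Set.sub_mem_sub hx.1 hz))
    (hR _ (Set.sub_mem_sub hyΩ hz))
  rw [dist_eq_norm, div_le_iff₀ (by positivity)]
  calc min lam1 lam2 ≤ μ / 2 * (‖y - z‖ ^ 2 - ‖x - z‖ ^ 2) := by linarith
    _ ≤ μ / 2 * (2 * R * ‖x - y‖) := by gcongr
    _ ≤ μhigh / 2 * (2 * R * ‖x - y‖) := by gcongr
    _ = ‖x - y‖ * (μhigh * R) := by ring

theorem stmt2_general {n p : ℕ} (B : Matrix (Fin p) (Fin n) ℝ) (lam1 lam2 : ℝ)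
    (hlam1 : 0 < lam1) (hlam2 : 0 < lam2)
    (l u : Fin n → ℝ)
    (Ξ : Set (EuclideanSpace ℝ (Fin n))) (hΞcomp : IsCompact Ξ)
    (μlow μhigh : ℝ) (hμlow : 0 < μlow) (hμ : μlow < μhigh) :
    ∃ ν > (0 : ℝ), ∀ z ∈ Ξ, ∀ μ : ℝ, μlow ≤ μ → μ ≤ μhigh →
      ∀ x ∈ proxSet B lam1 lam2 l u μ z, x ≠ 0 →
      ∀ i : Fin p ⊕ Fin n,
        (Matrix.fromRows B (1 : Matrix (Fin n) (Fin n) ℝ)).mulVec x i ≠ 0 →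
        ν ≤ |(Matrix.fromRows B (1 : Matrix (Fin n) (Fin n) ℝ)).mulVec x i| := by
  have hpattern (t : (Fin p ⊕ Fin n) × Set (Fin n) × Set (Fin p)) :=
    eventually_le_abs_fromRows_mulVec_of_support_eq B hlam1 hlam2 l u hΞcomp.isBounded
      (hμlow.trans hμ) t.1 t.2.1 t.2.2
  obtain ⟨ν, hν, hν0⟩ := ((eventually_all.2 hpattern).and self_mem_nhdsWithin).exists
  exact ⟨ν, hν0, fun z hz μ hμ1 hμ2 x hx _ i hxi =>
    hν (i, support x, support (B *ᵥ x)) z hz μ ⟨hμlow.le.trans hμ1, hμ2⟩ x hx rfl rfl hxi⟩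

/-- uniform lower bound on the nonzero entries of `C u = [B; I] u` for points
`u` of `⋃_{z∈Ξ, μ∈[μ_low,μ_high]} prox_{μ⁻¹ g}(z)`. -/
theorem stmt2 {n p : ℕ} (B : Matrix (Fin p) (Fin n) ℝ) (lam1 lam2 : ℝ)
    (hlam1 : 0 < lam1) (hlam2 : 0 < lam2)
    (l u : Fin n → ℝ) (hl : ∀ i, l i ≤ 0) (hu : ∀ i, 0 ≤ u i)
    (Ξ : Set (EuclideanSpace ℝ (Fin n))) (hΞne : Ξ.Nonempty) (hΞcomp : IsCompact Ξ)
    (μlow μhigh : ℝ) (hμlow : 0 < μlow) (hμ : μlow < μhigh) :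
    ∃ ν > (0 : ℝ), ∀ z ∈ Ξ, ∀ μ : ℝ, μlow ≤ μ → μ ≤ μhigh →
      ∀ x ∈ proxSet B lam1 lam2 l u μ z, x ≠ 0 →
      ∀ i : Fin p ⊕ Fin n,
        (Matrix.fromRows B (1 : Matrix (Fin n) (Fin n) ℝ)).mulVec x i ≠ 0 →
        ν ≤ |(Matrix.fromRows B (1 : Matrix (Fin n) (Fin n) ℝ)).mulVec x i| :=
  stmt2_general B lam1 lam2 hlam1 hlam2 l u Ξ hΞcomp μlow μhigh hμlow hμ

end
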